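/- arXiv:2012.07078 — 2 statements merged into one kernel-verified Lean document; each statement's English description precedes it below -/
import Mathlib

section
/- Let p be an odd prime and (V,Q) a nondegenerate quadratic space over ℚ_p of dimension n that admits an almost self-dual lattice Λ̄ (i.e. Λ̄ ⊆ Λ̄^∨ and length_{ℤ_p}(Λ̄^∨/Λ̄) = 1). Then there exists a ℚ_p-basis x₁,…,x_n of V and units a₁,…,a_n ∈ ℤ_p^× such that Λ̄ = ℤ_p x₁ ⊕ ⋯ ⊕ ℤ_p x_n and the Gram matrix of the associated bilinear form with respect to this basis is the diagonal matrix diag(p·a₁, a₂, a₃, …, a_n). -/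
/-!
If some `v ∈ Λ` has `[v, v]` a unit, then `Λ = ℤ_p v ⊕ (Λ ∩ v^⊥)`, the form stays
nondegenerate on `v^⊥`, and `Λ ∩ v^⊥` is almost self-dual in `v^⊥` (the class of the orthogonal
projection of `u` generating its discriminant group); so `v` splits off and one inducts on the
dimension. Otherwise, as `p` is odd, polarization puts all of `[Λ, Λ]` into `pℤ_p`, so
`p⁻¹Λ ⊆ Λ^∨`. As `Λ^∨/Λ` is cyclic of order `p`, this forces `Λ = ℤ_p x` to have rank one, and
`[x, x]` has valuation exactly one: otherwise `p⁻²x ∈ Λ^∨`, whence `p⁻¹x ∈ pΛ^∨ ⊆ Λ`.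
-/

open Module Submodule Set
open LinearMap (BilinForm)

namespace LinearMap.BilinForm

section OrthProj

variable {K W : Type*} [Field K] [AddCommGroup W] [Module K W] (C : BilinForm K W) (v : W)

/-- The projection onto `v^⊥` along `K ∙ v`, when `C v v ≠ 0`. -/
def orthProj : W →ₗ[K] W :=
  LinearMap.id - ((C v v)⁻¹ • C v).smulRight v

variable {C v}

lemma orthProj_apply (x : W) : C.orthProj v x = x - ((C v v)⁻¹ * C v x) • v := rfl

lemma orthProj_mem_orthogonal (hv : C v v ≠ 0) (x : W) :
    C.orthProj v x ∈ C.orthogonal (K ∙ v) := by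
  rw [mem_orthogonal_iff]
  intro n hn
  obtain ⟨c, rfl⟩ := mem_span_singleton.1 hn
  rw [orthProj_apply]
  simp only [map_smul, map_sub, LinearMap.smul_apply, smul_eq_mul]
  field_simp
  ring

lemma orthProj_eq_self {x : W} (hx : x ∈ C.orthogonal (K ∙ v)) : C.orthProj v x = x := by
  rw [orthProj_apply, mem_orthogonal_iff.1 hx v (mem_span_singleton_self v), mul_zero,
    zero_smul, sub_zero]

lemma apply_orthProj_left (x : W) {y : W} (hy : y ∈ C.orthogonal (K ∙ v)) :
    C (C.orthProj v x) y = C x y := by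
  rw [orthProj_apply, map_sub, map_smul, LinearMap.sub_apply, LinearMap.smul_apply,
    mem_orthogonal_iff.1 hy v (mem_span_singleton_self v), smul_zero, sub_zero]

end OrthProj

variable {R S M : Type*} [CommRing R] [Field S] [Algebra R S] [AddCommGroup M] [Module R M]
  [Module S M] [IsScalarTower R S M]

theorem fg_of_le_dualSubmodule [IsNoetherianRing R] [FiniteDimensional S M] {B : BilinForm S M}
    (hB : B.Nondegenerate) {Λ : Submodule R M} (hΛ : span S (Λ : Set M) = ⊤)
    (hle : Λ ≤ B.dualSubmodule Λ) : Λ.FG := by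
  classical
  let b := Basis.ofSpan hΛ.ge
  have := Module.Finite.finite_basis b
  have hbΛ : span R (Set.range b) ≤ Λ := span_le.2 (Basis.ofSpan_subset _)
  refine (fg_span (finite_range (B.dualBasis hB b))).of_le ?_
  rw [← B.dualSubmodule_span_of_basis hB b]
  exact fun x hx y hy => hle hx y (hbΛ hy)

end LinearMap.BilinForm

theorem Submodule.IsLattice.exists_basis_span_eq {R K M : Type*} [CommRing R] [IsDomain R]
    [IsPrincipalIdealRing R] [Field K] [Algebra R K] [IsFractionRing R K] [AddCommGroup M]
    [Module R M] [Module K M] [IsScalarTower R K M] (Λ : Submodule R M) [IsLattice K Λ] {n : ℕ}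
    (hn : finrank K M = n) : ∃ b : Basis (Fin n) K M, span R (range b) = Λ := by
  let bΛ := Module.Free.chooseBasis R Λ
  let bK := bΛ.extendOfIsLattice K
  refine ⟨bK.reindex (Fintype.equivFinOfCardEq (hn ▸ (finrank_eq_card_basis bK).symm)), ?_⟩
  have hbK : ⇑bK = Λ.subtype ∘ bΛ := funext (bΛ.extendOfIsLattice_apply K)
  rw [Basis.range_reindex, hbK, range_comp, span_image, bΛ.span_eq, map_subtype_top]

namespace PadicLattice

variable {p : ℕ} [Fact p.Prime]

lemma mem_range_algebraMap_iff {x : ℚ_[p]} :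
    x ∈ range (algebraMap ℤ_[p] ℚ_[p]) ↔ ‖x‖ ≤ 1 :=
  ⟨by rintro ⟨z, rfl⟩; exact z.norm_le_one, fun h => ⟨⟨x, h⟩, rfl⟩⟩

lemma norm_le_inv_of_norm_lt_one {x : ℚ_[p]} (hx : ‖x‖ < 1) : ‖x‖ ≤ (p : ℝ)⁻¹ := by
  simpa using (Padic.norm_lt_pow_iff_norm_le_pow_sub_one x 0).1 (by simpa using hx)

lemma norm_two_eq_one (hp : p ≠ 2) : ‖(2 : ℚ_[p])‖ = 1 := by
  exact_mod_cast Padic.norm_natCast_eq_one_iff.2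
    ((Nat.coprime_primes Fact.out Nat.prime_two).2 hp)

variable {V : Type*} [AddCommGroup V] [Module ℚ_[p] V] [Module ℤ_[p] V]
  {B : BilinForm ℚ_[p] V} {Λ : Submodule ℤ_[p] V}

lemma norm_apply_le_inv_of_forall_norm_apply_self_lt_one (hp : p ≠ 2) (hB : B.IsSymm)
    (hlt : ∀ v ∈ Λ, ‖B v v‖ < 1) {v w : V} (hv : v ∈ Λ) (hw : w ∈ Λ) :
    ‖B v w‖ ≤ (p : ℝ)⁻¹ := by
  have hsub (x y : ℚ_[p]) (hx : ‖x‖ < 1) (hy : ‖y‖ < 1) : ‖x - y‖ < 1 :=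
    (by simpa [sub_eq_add_neg] using Padic.nonarchimedean x (-y) : ‖x - y‖ ≤ _).trans_lt
      (max_lt hx hy)
  refine norm_le_inv_of_norm_lt_one ?_
  rw [hB.polarization, norm_div, norm_two_eq_one hp, div_one]
  exact hsub _ _ (hsub _ _ (hlt _ (add_mem hv hw)) (hlt v hv)) (hlt w hw)

/-- `b` is an orthogonal `ℚ_p`-basis of `V` and a `ℤ_p`-basis of `Λ`; norm `1` encodes a unit and
norm `p⁻¹` encodes `p` times a unit on the diagonal of the Gram matrix. -/
structure IsDiagonalizingBasis {ι : Type*} (B : BilinForm ℚ_[p] V) (Λ : Submodule ℤ_[p] V)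
    (b : Basis ι ℚ_[p] V) (i₀ : ι) : Prop where
  span_eq : span ℤ_[p] (range b) = Λ
  isOrthoᵢ : B.IsOrthoᵢ b
  norm_apply_self : ‖B (b i₀) (b i₀)‖ = (p : ℝ)⁻¹
  norm_apply_self_of_ne : ∀ i ≠ i₀, ‖B (b i) (b i)‖ = 1

namespace IsDiagonalizingBasis

variable {ι ι' : Type*} {b : Basis ι ℚ_[p] V} {i₀ : ι}

lemma reindex (hb : IsDiagonalizingBasis B Λ b i₀) (e : ι ≃ ι') :
    IsDiagonalizingBasis B Λ (b.reindex e) (e i₀) where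
  span_eq := by rw [Basis.range_reindex, hb.span_eq]
  isOrthoᵢ := LinearMap.isOrthoᵢ_def.2 fun i j hij => by
    simpa only [Basis.reindex_apply] using
      LinearMap.isOrthoᵢ_def.1 hb.isOrthoᵢ _ _ (e.symm.injective.ne hij)
  norm_apply_self := by
    simpa only [Basis.reindex_apply, e.symm_apply_apply] using hb.norm_apply_self
  norm_apply_self_of_ne i hi := by
    simpa only [Basis.reindex_apply] using hb.norm_apply_self_of_ne _ (e.symm_apply_eq.not.2 hi)

lemma exists_units [DecidableEq ι] (hb : IsDiagonalizingBasis B Λ b i₀) :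
    ∃ a : ι → ℤ_[p]ˣ, ∀ i, B (b i) (b i) = if i = i₀ then (p : ℚ_[p]) * a i else a i := by
  have hp0 : (p : ℚ_[p]) ≠ 0 := mod_cast (Fact.out : p.Prime).ne_zero
  have (i : ι) : ∃ a : ℤ_[p]ˣ, B (b i) (b i) = if i = i₀ then (p : ℚ_[p]) * a else a := by
    split_ifs with hi
    · subst hi
      have h1 : ‖B (b i) (b i) / p‖ = 1 := by
        rw [norm_div, hb.norm_apply_self, Padic.norm_p,
          div_self (by simp [(Fact.out : p.Prime).ne_zero])]
      exact ⟨PadicInt.mkUnits h1, by rw [PadicInt.mkUnits_eq, mul_div_cancel₀ _ hp0]⟩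
    · exact ⟨PadicInt.mkUnits (hb.norm_apply_self_of_ne i hi), (PadicInt.mkUnits_eq _).symm⟩
  choose a ha using this
  exact ⟨a, ha⟩

end IsDiagonalizingBasis

variable [IsScalarTower ℤ_[p] ℚ_[p] V]

lemma coe_smul (c : ℤ_[p]) (v : V) : (c : ℚ_[p]) • v = c • v := by
  rw [← PadicInt.algebraMap_apply, algebraMap_smul]

lemma smul_mem_of_norm_le_one {c : ℚ_[p]} (hc : ‖c‖ ≤ 1) {v : V} (hv : v ∈ Λ) : c • v ∈ Λ :=
  coe_smul (⟨c, hc⟩ : ℤ_[p]) v ▸ Λ.smul_mem _ hv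

lemma mem_span_range_iff_norm_repr_le_one {ι : Type*} (b : Basis ι ℚ_[p] V) {w : V} :
    w ∈ span ℤ_[p] (range b) ↔ ∀ i, ‖b.repr w i‖ ≤ 1 := by
  simp only [b.mem_span_iff_repr_mem ℤ_[p], mem_range_algebraMap_iff]

lemma inv_p_smul_not_mem_span {ι : Type*} (b : Basis ι ℚ_[p] V) (i : ι) :
    (p : ℚ_[p])⁻¹ • b i ∉ span ℤ_[p] (range b) := by
  rw [mem_span_range_iff_norm_repr_le_one]
  intro h
  have := h i
  simp only [map_smul, Basis.repr_self, Finsupp.smul_single, Finsupp.single_eq_same, smul_eq_mul,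
    mul_one, norm_inv, Padic.norm_p, inv_inv] at this
  exact this.not_gt (mod_cast (Fact.out : p.Prime).one_lt)

lemma mem_dualSubmodule_iff {v : V} : v ∈ B.dualSubmodule Λ ↔ ∀ w ∈ Λ, ‖B v w‖ ≤ 1 := by
  simp only [BilinForm.mem_dualSubmodule, Submodule.mem_one, ← Set.mem_range,
    mem_range_algebraMap_iff]

lemma mem_dualSubmodule_span_iff {s : Set V} {v : V} :
    v ∈ B.dualSubmodule (span ℤ_[p] s) ↔ ∀ w ∈ s, ‖B v w‖ ≤ 1 := by
  change span ℤ_[p] s ≤ (1 : Submodule ℤ_[p] ℚ_[p]).comap ((B v).restrictScalars ℤ_[p]) ↔ _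
  simp only [span_le, Set.subset_def, SetLike.mem_coe, mem_comap,
    LinearMap.restrictScalars_apply, Submodule.mem_one, ← Set.mem_range, mem_range_algebraMap_iff]

/-- `Λ ⊆ Λ^∨` and `Λ^∨ / Λ ≅ ℤ/p`, generated by the class of `u`. -/
structure IsAlmostSelfDual (B : BilinForm ℚ_[p] V) (Λ : Submodule ℤ_[p] V) (u : V) : Prop where
  dualSubmodule_eq : B.dualSubmodule Λ = Λ ⊔ ℤ_[p] ∙ u
  not_mem : u ∉ Λ
  p_smul_mem : (p : ℤ_[p]) • u ∈ Λ

namespace IsAlmostSelfDual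

variable {u : V}

lemma of_forall_norm_le_one (hself : ∀ v ∈ Λ, ∀ w ∈ Λ, ‖B v w‖ ≤ 1)
    (hu : ∀ w ∈ Λ, ‖B u w‖ ≤ 1) (hu_not : u ∉ Λ) (hpu : (p : ℤ_[p]) • u ∈ Λ)
    (hsub : ∀ v : V, (∀ w ∈ Λ, ‖B v w‖ ≤ 1) → ∃ c : ℤ_[p], v - c • u ∈ Λ) :
    IsAlmostSelfDual B Λ u where
  dualSubmodule_eq := by
    refine le_antisymm (fun v hv => ?_) (sup_le (fun v hv => mem_dualSubmodule_iff.2 (hself v hv))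
      ((span_singleton_le_iff_mem _ _).2 (mem_dualSubmodule_iff.2 hu)))
    obtain ⟨c, hc⟩ := hsub v (mem_dualSubmodule_iff.1 hv)
    exact mem_sup.2 ⟨_, hc, c • u, smul_mem _ c (mem_span_singleton_self u), sub_add_cancel _ _⟩
  not_mem := hu_not
  p_smul_mem := hpu

lemma le_dualSubmodule (h : IsAlmostSelfDual B Λ u) : Λ ≤ B.dualSubmodule Λ :=
  h.dualSubmodule_eq ▸ le_sup_left

lemma mem_dualSubmodule (h : IsAlmostSelfDual B Λ u) : u ∈ B.dualSubmodule Λ :=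
  h.dualSubmodule_eq ▸ mem_sup_right (mem_span_singleton_self u)

lemma exists_sub_mem (h : IsAlmostSelfDual B Λ u) {v : V} (hv : v ∈ B.dualSubmodule Λ) :
    ∃ c : ℤ_[p], v - c • u ∈ Λ := by
  rw [h.dualSubmodule_eq, mem_sup] at hv
  obtain ⟨y, hy, z, hz, rfl⟩ := hv
  obtain ⟨c, rfl⟩ := mem_span_singleton.1 hz
  exact ⟨c, by simpa using hy⟩

lemma smul_mem_of_norm_lt_one (h : IsAlmostSelfDual B Λ u) {c : ℤ_[p]} (hc : ‖c‖ < 1) :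
    c • u ∈ Λ := by
  obtain ⟨d, rfl⟩ := (PadicInt.norm_lt_one_iff_dvd c).1 hc
  rw [mul_comm, mul_smul]
  exact Λ.smul_mem d h.p_smul_mem

lemma p_smul_mem_of_mem_dualSubmodule (h : IsAlmostSelfDual B Λ u) {v : V}
    (hv : v ∈ B.dualSubmodule Λ) : (p : ℚ_[p]) • v ∈ Λ := by
  obtain ⟨c, hc⟩ := h.exists_sub_mem hv
  have := add_mem (Λ.smul_mem (p : ℤ_[p]) hc) (Λ.smul_mem c h.p_smul_mem)
  rwa [smul_sub, smul_comm _ c u, sub_add_cancel, ← coe_smul, PadicInt.coe_natCast] at this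

lemma finrank_pos [FiniteDimensional ℚ_[p] V] (h : IsAlmostSelfDual B Λ u) :
    0 < finrank ℚ_[p] V :=
  finrank_pos_iff_exists_ne_zero.2 ⟨u, fun hu => h.not_mem (hu ▸ Λ.zero_mem)⟩

lemma eq_of_inv_p_smul_mem_dualSubmodule (h : IsAlmostSelfDual B Λ u) {ι : Type*}
    (b : Basis ι ℚ_[p] V) (hb : span ℤ_[p] (range b) = Λ) {i j : ι}
    (hi : (p : ℚ_[p])⁻¹ • b i ∈ B.dualSubmodule Λ) (hj : (p : ℚ_[p])⁻¹ • b j ∈ B.dualSubmodule Λ) :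
    i = j := by
  by_contra hij
  obtain ⟨ci, hci⟩ := h.exists_sub_mem hi
  obtain ⟨cj, hcj⟩ := h.exists_sub_mem hj
  -- the `u`-components cancel
  have hcomb : ((ci : ℚ_[p]) * (p : ℚ_[p])⁻¹) • b j - ((cj : ℚ_[p]) * (p : ℚ_[p])⁻¹) • b i ∈ Λ := by
    convert sub_mem (Λ.smul_mem ci hcj) (Λ.smul_mem cj hci) using 1
    simp only [← coe_smul, smul_sub, smul_smul]
    module
  have hcj_lt : ‖cj‖ < 1 := by
    rw [← hb, mem_span_range_iff_norm_repr_le_one] at hcomb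
    have := hcomb i
    simp [Ne.symm hij, Padic.norm_p] at this
    nlinarith [norm_nonneg cj, (show (1 : ℝ) < p from mod_cast (Fact.out : p.Prime).one_lt)]
  apply inv_p_smul_not_mem_span b j
  rw [hb]
  simpa using add_mem hcj (h.smul_mem_of_norm_lt_one hcj_lt)

lemma norm_apply_self_eq_inv_p (h : IsAlmostSelfDual B Λ u) {ι : Type*} [Subsingleton ι]
    (b : Basis ι ℚ_[p] V) (hb : span ℤ_[p] (range b) = Λ) (i : ι)
    (hlt : ‖B (b i) (b i)‖ < 1) : ‖B (b i) (b i)‖ = (p : ℝ)⁻¹ := by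
  refine le_antisymm (norm_le_inv_of_norm_lt_one hlt) (not_lt.1 fun hq => ?_)
  have hq2 : ‖B (b i) (b i)‖ ≤ ((p : ℝ) ^ 2)⁻¹ := by
    simpa using (Padic.norm_lt_pow_iff_norm_le_pow_sub_one _ (-1)).1 (by simpa using hq)
  have hdual : ((p : ℚ_[p]) ^ 2)⁻¹ • b i ∈ B.dualSubmodule Λ := by
    rw [← hb, mem_dualSubmodule_span_iff]
    rintro _ ⟨j, rfl⟩
    rw [Subsingleton.elim j i, map_smul, LinearMap.smul_apply, smul_eq_mul, norm_mul, norm_inv,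
      norm_pow, Padic.norm_p, inv_pow, inv_inv]
    calc _ ≤ (p : ℝ) ^ 2 * ((p : ℝ) ^ 2)⁻¹ := by gcongr
      _ = 1 := mul_inv_cancel₀ (pow_ne_zero 2 (mod_cast (Fact.out : p.Prime).ne_zero))
  apply inv_p_smul_not_mem_span b i
  rw [hb]
  convert h.p_smul_mem_of_mem_dualSubmodule hdual using 1
  rw [smul_smul]
  congr 1
  field_simp

end IsAlmostSelfDual

section Splitting

variable {v : V}

lemma orthProj_mem_iff (hvΛ : v ∈ Λ) (hv : ‖B v v‖ = 1) {x : V} (hx : ‖B v x‖ ≤ 1) :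
    B.orthProj v x ∈ Λ ↔ x ∈ Λ := by
  rw [BilinForm.orthProj_apply]
  refine Λ.sub_mem_iff_left (smul_mem_of_norm_le_one ?_ hvΛ)
  rwa [norm_mul, norm_inv, hv, inv_one, one_mul]

variable (B Λ v) in
/-- `Λ ∩ v^⊥`, as a lattice in `v^⊥`. -/
noncomputable def orthLattice : Submodule ℤ_[p] (B.orthogonal (ℚ_[p] ∙ v)) :=
  Λ.comap ((B.orthogonal (ℚ_[p] ∙ v)).subtype.restrictScalars ℤ_[p])

lemma mem_orthLattice {x : B.orthogonal (ℚ_[p] ∙ v)} : x ∈ orthLattice B Λ v ↔ (x : V) ∈ Λ :=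
  Iff.rfl

lemma span_orthLattice (hv : B v v ≠ 0) (hΛ : span ℚ_[p] (Λ : Set V) = ⊤)
    (hproj : ∀ x ∈ Λ, B.orthProj v x ∈ Λ) :
    span ℚ_[p] (orthLattice B Λ v : Set (B.orthogonal (ℚ_[p] ∙ v))) = ⊤ := by
  apply map_injective_of_injective (B.orthogonal (ℚ_[p] ∙ v)).injective_subtype
  rw [map_span, Submodule.map_top, range_subtype]
  refine le_antisymm (span_le.2 (by rintro _ ⟨x, -, rfl⟩; exact x.2)) fun x hx => ?_
  have : x ∈ map (B.orthProj v) (span ℚ_[p] Λ) := hΛ ▸ ⟨x, trivial, BilinForm.orthProj_eq_self hx⟩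
  rw [← span_image] at this
  refine span_mono ?_ this
  rintro _ ⟨y, hy, rfl⟩
  exact ⟨⟨_, BilinForm.orthProj_mem_orthogonal hv y⟩, hproj y hy, rfl⟩

lemma eq_span_singleton_sup_orthLattice (hvΛ : v ∈ Λ) (hv : ‖B v v‖ = 1)
    (hle : Λ ≤ B.dualSubmodule Λ) :
    Λ = (ℤ_[p] ∙ v) ⊔ (orthLattice B Λ v).map
      ((B.orthogonal (ℚ_[p] ∙ v)).subtype.restrictScalars ℤ_[p]) := by
  have hv0 : B v v ≠ 0 := norm_ne_zero_iff.1 (hv ▸ one_ne_zero)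
  refine le_antisymm (fun x hx => ?_) (sup_le ((span_singleton_le_iff_mem _ _).2 hvΛ)
    (map_comap_le _ _))
  have hvx : ‖B v x‖ ≤ 1 := mem_dualSubmodule_iff.1 (hle hvΛ) x hx
  have hc : ‖(B v v)⁻¹ * B v x‖ ≤ 1 := by rwa [norm_mul, norm_inv, hv, inv_one, one_mul]
  let c : ℤ_[p] := ⟨_, hc⟩
  refine mem_sup.2 ⟨c • v, mem_span_singleton.2 ⟨_, rfl⟩, B.orthProj v x,
    ⟨⟨_, BilinForm.orthProj_mem_orthogonal hv0 x⟩, (orthProj_mem_iff hvΛ hv hvx).2 hx, rfl⟩, ?_⟩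
  rw [← coe_smul, BilinForm.orthProj_apply]
  exact add_sub_cancel _ _

theorem IsAlmostSelfDual.exists_orthLattice (hB : B.IsSymm) {u : V}
    (h : IsAlmostSelfDual B Λ u) (hvΛ : v ∈ Λ) (hv : ‖B v v‖ = 1) :
    ∃ u', IsAlmostSelfDual (B.restrict (B.orthogonal (ℚ_[p] ∙ v))) (orthLattice B Λ v) u' := by
  have hv0 : B v v ≠ 0 := norm_ne_zero_iff.1 (hv ▸ one_ne_zero)
  have hproj : ∀ x ∈ B.dualSubmodule Λ, B.orthProj v x ∈ Λ ↔ x ∈ Λ := fun x hx =>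
    orthProj_mem_iff hvΛ hv (hB.eq v x ▸ mem_dualSubmodule_iff.1 hx v hvΛ)
  let u' : B.orthogonal (ℚ_[p] ∙ v) := ⟨B.orthProj v u, BilinForm.orthProj_mem_orthogonal hv0 u⟩
  refine ⟨u', ⟨le_antisymm (fun x hx => ?_) (sup_le (fun x hx => ?_) ?_), fun hu' => ?_, ?_⟩⟩
  · have hxΛ : (x : V) ∈ B.dualSubmodule Λ := mem_dualSubmodule_iff.2 fun w hw => by
      have hπw : (⟨_, BilinForm.orthProj_mem_orthogonal hv0 w⟩ : B.orthogonal (ℚ_[p] ∙ v)) ∈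
          orthLattice B Λ v := (hproj w (h.le_dualSubmodule hw)).2 hw
      rw [hB.eq, ← BilinForm.apply_orthProj_left w x.2, hB.eq]
      exact mem_dualSubmodule_iff.1 hx _ hπw
    obtain ⟨c, hc⟩ := h.exists_sub_mem hxΛ
    have hc' : x - c • u' ∈ orthLattice B Λ v := by
      have := (hproj _ (sub_mem hxΛ (Submodule.smul_mem _ c h.mem_dualSubmodule))).2 hc
      rwa [map_sub, LinearMap.map_smul_of_tower, BilinForm.orthProj_eq_self x.2] at this
    exact mem_sup.2 ⟨_, hc', c • u', smul_mem _ c (mem_span_singleton_self u'), sub_add_cancel _ _⟩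
  · exact mem_dualSubmodule_iff.2 fun y hy => mem_dualSubmodule_iff.1 (h.le_dualSubmodule hx) y hy
  · refine (span_singleton_le_iff_mem _ _).2 (mem_dualSubmodule_iff.2 fun y hy => ?_)
    change ‖B (B.orthProj v u) y‖ ≤ 1
    rw [BilinForm.apply_orthProj_left u y.2]
    exact mem_dualSubmodule_iff.1 h.mem_dualSubmodule y hy
  · exact h.not_mem ((hproj u h.mem_dualSubmodule).1 hu')
  · rw [mem_orthLattice, Submodule.coe_smul_of_tower, ← LinearMap.map_smul_of_tower]
    exact (hproj _ (h.le_dualSubmodule h.p_smul_mem)).2 h.p_smul_mem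

lemma exists_isDiagonalizingBasis_cons (hB : B.IsSymm) (hvΛ : v ∈ Λ) (hv : ‖B v v‖ = 1)
    (hle : Λ ≤ B.dualSubmodule Λ) {n : ℕ} {b : Basis (Fin n) ℚ_[p] (B.orthogonal (ℚ_[p] ∙ v))}
    {i₀ : Fin n} (hb : IsDiagonalizingBasis (B.restrict _) (orthLattice B Λ v) b i₀) :
    ∃ b' : Basis (Fin (n + 1)) ℚ_[p] V, IsDiagonalizingBasis B Λ b' i₀.succ := by
  have hv0 : B v v ≠ 0 := norm_ne_zero_iff.1 (hv ▸ one_ne_zero)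
  have horth (x : B.orthogonal (ℚ_[p] ∙ v)) : B v x = 0 :=
    BilinForm.mem_orthogonal_iff.1 x.2 v (mem_span_singleton_self v)
  refine ⟨Basis.mkFinCons v b (fun c x hx hcx => ?_) (fun z => ⟨-((B v v)⁻¹ * B v z), ?_⟩),
    ⟨?_, ?_, ?_, ?_⟩⟩
  · have := congrArg (B v) hcx
    rw [map_add, map_smul, horth ⟨x, hx⟩, add_zero, smul_eq_mul, map_zero] at this
    exact (mul_eq_zero.1 this).resolve_right hv0
  · simpa only [BilinForm.orthProj_apply, neg_smul, ← sub_eq_add_neg] using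
      BilinForm.orthProj_mem_orthogonal hv0 z
  · rw [Basis.coe_mkFinCons, Fin.range_cons, span_insert, range_comp,
      show Subtype.val '' range b = (B.orthogonal (ℚ_[p] ∙ v)).subtype.restrictScalars ℤ_[p] ''
        range b from rfl, span_image, hb.span_eq]
    exact (eq_span_singleton_sup_orthLattice hvΛ hv hle).symm
  · rw [LinearMap.isOrthoᵢ_def, Basis.coe_mkFinCons]
    intro i j hij
    induction i using Fin.cases <;> induction j using Fin.cases
    · exact absurd rfl hij
    · simp [horth]
    · simp [hB.eq _ v, horth]
    · exact LinearMap.isOrthoᵢ_def.1 hb.isOrthoᵢ _ _ (fun h => hij (congrArg Fin.succ h))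
  · simpa using hb.norm_apply_self
  · intro i hi
    induction i using Fin.cases
    · simpa using hv
    · simpa using hb.norm_apply_self_of_ne _ (fun h => hi (congrArg Fin.succ h))

end Splitting

namespace IsAlmostSelfDual

variable [FiniteDimensional ℚ_[p] V] {u : V} {n : ℕ}

theorem exists_isDiagonalizingBasis_of_forall_norm_apply_self_lt_one (hp : p ≠ 2)
    (hB : B.IsSymm) (hBn : B.Nondegenerate) (hΛ : span ℚ_[p] (Λ : Set V) = ⊤)
    (h : IsAlmostSelfDual B Λ u) (hlt : ∀ x ∈ Λ, ‖B x x‖ < 1) (hn : finrank ℚ_[p] V = n) :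
    ∃ (b : Basis (Fin n) ℚ_[p] V) (i₀ : Fin n), IsDiagonalizingBasis B Λ b i₀ := by
  have : IsLattice ℚ_[p] Λ := ⟨BilinForm.fg_of_le_dualSubmodule hBn hΛ h.le_dualSubmodule, hΛ⟩
  obtain ⟨b, hb⟩ := IsLattice.exists_basis_span_eq Λ hn
  have hbΛ (i : Fin n) : b i ∈ Λ := hb ▸ subset_span ⟨i, rfl⟩
  have hdual (i : Fin n) : (p : ℚ_[p])⁻¹ • b i ∈ B.dualSubmodule Λ :=
    mem_dualSubmodule_iff.2 fun w hw => by
      rw [map_smul, LinearMap.smul_apply, smul_eq_mul, norm_mul, norm_inv, Padic.norm_p, inv_inv]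
      calc _ ≤ (p : ℝ) * (p : ℝ)⁻¹ := by
            gcongr
            exact norm_apply_le_inv_of_forall_norm_apply_self_lt_one hp hB hlt (hbΛ i) hw
        _ = 1 := mul_inv_cancel₀ (mod_cast (Fact.out : p.Prime).ne_zero)
  have : Subsingleton (Fin n) :=
    ⟨fun i j => h.eq_of_inv_p_smul_mem_dualSubmodule b hb (hdual i) (hdual j)⟩
  let i₀ : Fin n := ⟨0, hn ▸ h.finrank_pos⟩
  exact ⟨b, i₀, hb, fun i j hij => (hij (Subsingleton.elim i j)).elim,
    h.norm_apply_self_eq_inv_p b hb i₀ (hlt _ (hbΛ i₀)),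
    fun i hi => (hi (Subsingleton.elim i i₀)).elim⟩

theorem exists_isDiagonalizingBasis (hp : p ≠ 2) (hB : B.IsSymm) (hBn : B.Nondegenerate)
    (hΛ : span ℚ_[p] (Λ : Set V) = ⊤) (h : IsAlmostSelfDual B Λ u) (hn : finrank ℚ_[p] V = n) :
    ∃ (b : Basis (Fin n) ℚ_[p] V) (i₀ : Fin n), IsDiagonalizingBasis B Λ b i₀ := by
  induction n generalizing V with
  | zero => exact absurd hn h.finrank_pos.ne'
  | succ n ih =>
    by_cases hunit : ∃ v ∈ Λ, ‖B v v‖ = 1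
    · obtain ⟨v, hvΛ, hv⟩ := hunit
      have hv0 : B v v ≠ 0 := norm_ne_zero_iff.1 (hv ▸ one_ne_zero)
      have hW : finrank ℚ_[p] (B.orthogonal (ℚ_[p] ∙ v)) = n := by
        have := finrank_add_eq_of_isCompl (BilinForm.isCompl_span_singleton_orthogonal hv0)
        rw [finrank_span_singleton (fun h0 => hv0 (by simp [h0]))] at this
        omega
      have hproj (x : V) (hx : x ∈ Λ) : B.orthProj v x ∈ Λ :=
        (orthProj_mem_iff hvΛ hv (mem_dualSubmodule_iff.1 (h.le_dualSubmodule hvΛ) x hx)).2 hx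
      obtain ⟨u', hu'⟩ := h.exists_orthLattice hB hvΛ hv
      obtain ⟨b, i₀, hb⟩ := ih (hB.restrict _)
        (B.restrict_nondegenerate_orthogonal_spanSingleton hBn hB.isRefl hv0)
        (span_orthLattice hv0 hΛ hproj) hu' hW
      obtain ⟨b', hb'⟩ := exists_isDiagonalizingBasis_cons hB hvΛ hv h.le_dualSubmodule hb
      exact ⟨b', _, hb'⟩
    · exact h.exists_isDiagonalizingBasis_of_forall_norm_apply_self_lt_one hp hB hBn hΛ
        (fun x hx => (mem_dualSubmodule_iff.1 (h.le_dualSubmodule hx) x hx).lt_of_ne fun hx1 =>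
          hunit ⟨x, hx, hx1⟩) hn

end IsAlmostSelfDual

end PadicLattice

theorem stmt_2_general (p : ℕ) [Fact p.Prime] (hp : p ≠ 2) (n : ℕ)
    (V : Type*) [AddCommGroup V] [Module ℚ_[p] V] [Module ℤ_[p] V]
    [IsScalarTower ℤ_[p] ℚ_[p] V] [FiniteDimensional ℚ_[p] V]
    (hdim : Module.finrank ℚ_[p] V = n)
    (Q : QuadraticForm ℚ_[p] V) (hQ : (QuadraticMap.polarBilin Q).Nondegenerate)
    (Λ : Submodule ℤ_[p] V)
    (hfull : Submodule.span ℚ_[p] (Λ : Set V) = ⊤)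
    (hself : ∀ v ∈ Λ, ∀ w ∈ Λ, ‖QuadraticMap.polar Q v w‖ ≤ 1)
    (hlen : ∃ u : V, (∀ w ∈ Λ, ‖QuadraticMap.polar Q u w‖ ≤ 1) ∧ u ∉ Λ ∧
      (p : ℤ_[p]) • u ∈ Λ ∧
      ∀ v : V, (∀ w ∈ Λ, ‖QuadraticMap.polar Q v w‖ ≤ 1) →
        ∃ c : ℤ_[p], v - c • u ∈ Λ) :
    ∃ (x : Fin n → V) (a : Fin n → ℤ_[p]ˣ),
      LinearIndependent ℚ_[p] x ∧
      Submodule.span ℚ_[p] (Set.range x) = ⊤ ∧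
      Λ = Submodule.span ℤ_[p] (Set.range x) ∧
      ∀ i j : Fin n, QuadraticMap.polar Q (x i) (x j) =
        if i = j then
          (if (i : ℕ) = 0 then (p : ℚ_[p]) * ((a i : ℤ_[p]) : ℚ_[p])
            else ((a i : ℤ_[p]) : ℚ_[p]))
        else 0 := by
  obtain ⟨u, hu, hu_not, hpu, hsub⟩ := hlen
  have h := PadicLattice.IsAlmostSelfDual.of_forall_norm_le_one
    (B := QuadraticMap.polarBilin Q) hself hu hu_not hpu hsub
  obtain ⟨b, i₀, hb⟩ :=
    h.exists_isDiagonalizingBasis hp ⟨QuadraticMap.polar_comm Q⟩ hQ hfull hdim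
  let e := Equiv.swap i₀ ⟨0, i₀.pos⟩
  obtain ⟨a, ha⟩ := (hb.reindex e).exists_units
  refine ⟨b.reindex e, a, (b.reindex e).linearIndependent, (b.reindex e).span_eq,
    (hb.reindex e).span_eq.symm, fun i j => ?_⟩
  rcases eq_or_ne i j with rfl | hij
  · simpa [e, Fin.ext_iff] using ha i
  · rw [if_neg hij]
    exact LinearMap.isOrthoᵢ_def.1 (hb.reindex e).isOrthoᵢ i j hij

/-- If `(V, Q)` is a nondegenerate quadratic space of dimension `n` over `ℚ_p`
(`p` odd) admitting an almost self-dual lattice `Λ` (i.e. `Λ ⊆ Λ^∨` and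
`length (Λ^∨/Λ) = 1`, the latter encoded by the existence of `u ∈ Λ^∨` with `u ∉ Λ`,
`p • u ∈ Λ` and `Λ^∨ = Λ + ℤ_p u`; membership in the dual lattice `Λ^∨` is encoded by
`‖[v,w]‖ ≤ 1` for all `w ∈ Λ`), then there exist a `ℚ_p`-basis `x` of `V` and units
`a i ∈ ℤ_p^×` such that `Λ` is the `ℤ_p`-span of `x` and the Gram matrix of the bilinear
form `[·,·] = polar Q` is `diag(p·a₀, a₁, …, a_{n-1})`. -/
theorem stmt_2 (p : ℕ) [Fact p.Prime] (hp : p ≠ 2) (n : ℕ) (hn : 1 ≤ n)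
    (V : Type*) [AddCommGroup V] [Module ℚ_[p] V] [Module ℤ_[p] V]
    [IsScalarTower ℤ_[p] ℚ_[p] V] [FiniteDimensional ℚ_[p] V]
    (hdim : Module.finrank ℚ_[p] V = n)
    (Q : QuadraticForm ℚ_[p] V) (hQ : (QuadraticMap.polarBilin Q).Nondegenerate)
    (Λ : Submodule ℤ_[p] V)
    (hfull : Submodule.span ℚ_[p] (Λ : Set V) = ⊤)
    (hself : ∀ v ∈ Λ, ∀ w ∈ Λ, ‖QuadraticMap.polar Q v w‖ ≤ 1)
    (hlen : ∃ u : V, (∀ w ∈ Λ, ‖QuadraticMap.polar Q u w‖ ≤ 1) ∧ u ∉ Λ ∧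
      (p : ℤ_[p]) • u ∈ Λ ∧
      ∀ v : V, (∀ w ∈ Λ, ‖QuadraticMap.polar Q v w‖ ≤ 1) →
        ∃ c : ℤ_[p], v - c • u ∈ Λ) :
    ∃ (x : Fin n → V) (a : Fin n → ℤ_[p]ˣ),
      LinearIndependent ℚ_[p] x ∧
      Submodule.span ℚ_[p] (Set.range x) = ⊤ ∧
      Λ = Submodule.span ℤ_[p] (Set.range x) ∧
      ∀ i j : Fin n, QuadraticMap.polar Q (x i) (x j) =
        if i = j then
          (if (i : ℕ) = 0 then (p : ℚ_[p]) * ((a i : ℤ_[p]) : ℚ_[p])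
            else ((a i : ℤ_[p]) : ℚ_[p]))
        else 0 :=
  stmt_2_general p hp n V hdim Q hQ Λ hfull hself hlen
end

section
/- Let p be an odd prime, L₀^♯ a nondegenerate quadratic space over ℚ_p containing an anisotropic vector x₀ with Q(x₀) ∈ ℤ_p^× (up to a unit normalization), and L₀ the orthogonal complement of x₀. If Λ is a vertex lattice in L₀ (i.e. pΛ ⊆ Λ^∨ ⊆ Λ), then Λ^♯ := Λ ⊕ ℤ_p(p⁻¹x₀) is a vertex lattice in L₀^♯ (i.e. pΛ^♯ ⊆ (Λ^♯)^∨ ⊆ Λ^♯), and its type satisfies t(Λ^♯) = t(Λ) + 1, where the type of a vertex lattice M is length_{ℤ_p}(M/M^∨). -/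
/-!
Put `y = p⁻¹ x₀`; since `[x₀, x₀] = p u` with `u` a unit, `[y, y] = u / p` has norm `p`.
Decompose every `d ∈ L₀^♯` along the orthogonal sum `L₀^♯ = L₀ ⊕ ℚ_p y` as
`d = π d + c(d) y`. Then `d ∈ Λ^♯` iff `π d ∈ Λ` and `c(d) ∈ ℤ_p`, while, the sum being
orthogonal, `d ∈ (Λ^♯)^∨` iff `π d ∈ Λ^∨` and `c(d) [y, y] ∈ ℤ_p`, i.e. `c(d) ∈ pℤ_p`.
The vertex conditions for `Λ^♯` follow componentwise, and `(π, c mod p)` identifies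
`Λ^♯ / (Λ^♯)^∨` with `Λ / Λ^∨ × 𝔽_p`, so the type goes up by one.
-/

/-- The dual lattice of a `ℤ_p`-lattice `Λ` inside the `ℚ_p`-subspace `L` of `W`,
with respect to the bilinear form `[v,w] = polar Q v w`:
`Λ^∨ = {v ∈ L : [v, Λ] ⊆ ℤ_p}`. -/
noncomputable def dualLattice {p : ℕ} [Fact p.Prime] {W : Type*} [AddCommGroup W]
    [Module ℚ_[p] W] [Module ℤ_[p] W] [IsScalarTower ℤ_[p] ℚ_[p] W]
    (Q : QuadraticForm ℚ_[p] W) (L : Submodule ℚ_[p] W) (Λ : Submodule ℤ_[p] W) :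
    Submodule ℤ_[p] W :=
  L.restrictScalars ℤ_[p] ⊓
    ⨅ w ∈ Λ, Submodule.comap
      (((QuadraticMap.polarBilin Q).flip w).restrictScalars ℤ_[p])
      (1 : Submodule ℤ_[p] ℚ_[p])

/-- `Λ` is a vertex lattice in the subspace `L`: a full `ℤ_p`-lattice in `L` with
`pΛ ⊆ Λ^∨ ⊆ Λ` (duals taken inside `L`). -/
def IsVertexLattice {p : ℕ} [Fact p.Prime] {W : Type*} [AddCommGroup W]
    [Module ℚ_[p] W] [Module ℤ_[p] W] [IsScalarTower ℤ_[p] ℚ_[p] W]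
    (Q : QuadraticForm ℚ_[p] W) (L : Submodule ℚ_[p] W) (Λ : Submodule ℤ_[p] W) : Prop :=
  (Λ : Set W) ⊆ (L : Set W) ∧ Submodule.span ℚ_[p] (Λ : Set W) = L ∧
  (∀ v ∈ Λ, (p : ℤ_[p]) • v ∈ dualLattice Q L Λ) ∧ dualLattice Q L Λ ≤ Λ

/-- The orthogonal complement of `x₀` with respect to the polar form of `Q`. -/
noncomputable def perpSpace {p : ℕ} [Fact p.Prime] {W : Type*} [AddCommGroup W]
    [Module ℚ_[p] W] (Q : QuadraticForm ℚ_[p] W) (x₀ : W) : Submodule ℚ_[p] W :=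
  LinearMap.BilinForm.orthogonal (QuadraticMap.polarBilin Q) (Submodule.span ℚ_[p] {x₀})

open QuadraticMap

section OrthogonalDecomposition

variable {p : ℕ} [Fact p.Prime] {W : Type*} [AddCommGroup W] [Module ℚ_[p] W]
  (Q : QuadraticForm ℚ_[p] W) (y : W)

lemma mem_perpSpace_iff {v : W} : v ∈ perpSpace Q y ↔ polar Q y v = 0 := by
  simp only [perpSpace, LinearMap.BilinForm.mem_orthogonal_iff, Submodule.mem_span_singleton,
    forall_exists_index, forall_apply_eq_imp_iff, polarBilin_apply_apply, polar_smul_left]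
  exact ⟨fun h => by simpa using h 1, fun h a => by rw [h, smul_zero]⟩

lemma perpSpace_smul {c : ℚ_[p]} (hc : c ≠ 0) : perpSpace Q (c • y) = perpSpace Q y := by
  rw [perpSpace, Submodule.span_singleton_smul_eq hc.isUnit, perpSpace]

/-- The coefficient of `y` in the decomposition `W = y^⊥ ⊕ ℚ_p y`, valid when `[y, y] ≠ 0`. -/
noncomputable def orthoCoeff : W →ₗ[ℚ_[p]] ℚ_[p] := (polar Q y y)⁻¹ • polarBilin Q y

noncomputable def orthoProj : W →ₗ[ℚ_[p]] W := LinearMap.id - (orthoCoeff Q y).smulRight y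

lemma orthoProj_add_orthoCoeff_smul (d : W) : orthoProj Q y d + orthoCoeff Q y d • y = d := by
  simp [orthoProj]

variable {Q y}

lemma orthoCoeff_apply (d : W) : orthoCoeff Q y d = (polar Q y y)⁻¹ * polar Q y d := rfl

lemma orthoCoeff_eq_zero_of_mem {v : W} (hv : v ∈ perpSpace Q y) : orthoCoeff Q y v = 0 := by
  rw [orthoCoeff_apply, (mem_perpSpace_iff Q y).1 hv, mul_zero]

lemma orthoCoeff_self (hy : polar Q y y ≠ 0) : orthoCoeff Q y y = 1 := inv_mul_cancel₀ hy

lemma orthoProj_mem_perpSpace (hy : polar Q y y ≠ 0) (d : W) :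
    orthoProj Q y d ∈ perpSpace Q y := by
  rw [mem_perpSpace_iff, orthoProj, LinearMap.sub_apply, LinearMap.id_apply,
    LinearMap.smulRight_apply, polar_sub_right, polar_smul_right, orthoCoeff_apply, smul_eq_mul,
    mul_comm _ (polar Q y y), mul_inv_cancel_left₀ hy, sub_self]

lemma orthoCoeff_add_smul (hy : polar Q y y ≠ 0) {l : W} (hl : l ∈ perpSpace Q y) (a : ℚ_[p]) :
    orthoCoeff Q y (l + a • y) = a := by
  simp [orthoCoeff_eq_zero_of_mem hl, orthoCoeff_self hy]

lemma orthoProj_add_smul (hy : polar Q y y ≠ 0) {l : W} (hl : l ∈ perpSpace Q y) (a : ℚ_[p]) :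
    orthoProj Q y (l + a • y) = l := by
  simp [orthoProj, orthoCoeff_add_smul hy hl]

lemma polar_orthoProj_left (d : W) {l : W} (hl : l ∈ perpSpace Q y) :
    polar Q (orthoProj Q y d) l = polar Q d l := by
  conv_rhs => rw [← orthoProj_add_orthoCoeff_smul Q y d]
  rw [polar_add_left, polar_smul_left, (mem_perpSpace_iff Q y).1 hl, smul_zero, add_zero]

lemma polar_right_eq_orthoCoeff_mul (hy : polar Q y y ≠ 0) (d : W) :
    polar Q d y = orthoCoeff Q y d * polar Q y y := by
  rw [polar_comm, orthoCoeff_apply, mul_comm, mul_inv_cancel_left₀ hy]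

lemma polar_ne_zero_of_norm_eq (hyn : ‖polar Q y y‖ = p) : polar Q y y ≠ 0 := by
  rw [← norm_ne_zero_iff, hyn]
  exact Nat.cast_ne_zero.2 (Fact.out : p.Prime).ne_zero

end OrthogonalDecomposition

lemma PadicInt.mem_one_iff_norm_le_one {p : ℕ} [Fact p.Prime] {x : ℚ_[p]} :
    x ∈ (1 : Submodule ℤ_[p] ℚ_[p]) ↔ ‖x‖ ≤ 1 :=
  Submodule.mem_one.trans ⟨fun ⟨z, hz⟩ => hz ▸ z.2, fun h => ⟨⟨x, h⟩, rfl⟩⟩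

lemma Padic.norm_mul_le_one_iff_norm_lt_one {p : ℕ} [Fact p.Prime] {c b : ℚ_[p]}
    (hb : ‖b‖ = p) : ‖c * b‖ ≤ 1 ↔ ‖c‖ < 1 := by
  have hp : (0 : ℝ) < p := Nat.cast_pos.2 (Fact.out : p.Prime).pos
  rw [norm_mul, hb, ← le_div_iff₀ hp, one_div, ← zpow_neg_one,
    Padic.norm_le_pow_iff_norm_lt_pow_add_one, neg_add_cancel, zpow_zero]

section Lattices

variable {p : ℕ} [Fact p.Prime] {W : Type*} [AddCommGroup W] [Module ℚ_[p] W]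
  [Module ℤ_[p] W] {Q : QuadraticForm ℚ_[p] W} {y : W} {Λ : Submodule ℤ_[p] W}

lemma span_sup_span_singleton_eq_top (hy : polar Q y y ≠ 0)
    (hΛ : Submodule.span ℚ_[p] (Λ : Set W) = perpSpace Q y) :
    Submodule.span ℚ_[p] ((Λ ⊔ Submodule.span ℤ_[p] {y} : Submodule ℤ_[p] W) : Set W) = ⊤ := by
  refine eq_top_iff.2 fun d _ => ?_
  rw [← orthoProj_add_orthoCoeff_smul Q y d]
  have hΛle := Submodule.span_mono (R := ℚ_[p]) (SetLike.coe_subset_coe.2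
    (le_sup_left : Λ ≤ Λ ⊔ Submodule.span ℤ_[p] {y}))
  refine add_mem (hΛle ?_) (Submodule.smul_mem _ _ (Submodule.subset_span ?_))
  · rw [hΛ]
    exact orthoProj_mem_perpSpace hy d
  · exact Submodule.mem_sup_right (Submodule.mem_span_singleton_self y)

variable [IsScalarTower ℤ_[p] ℚ_[p] W]

lemma PadicInt.smul_eq_coe_smul (z : ℤ_[p]) (w : W) : z • w = (z : ℚ_[p]) • w :=
  (algebraMap_smul ℚ_[p] z w).symm

lemma mem_dualLattice_iff {L : Submodule ℚ_[p] W} {v : W} :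
    v ∈ dualLattice Q L Λ ↔ v ∈ L ∧ ∀ w ∈ Λ, ‖polar Q v w‖ ≤ 1 := by
  simp only [dualLattice, Submodule.mem_inf, Submodule.restrictScalars_mem, Submodule.mem_iInf,
    Submodule.mem_comap, LinearMap.coe_restrictScalars, LinearMap.flip_apply,
    polarBilin_apply_apply, PadicInt.mem_one_iff_norm_le_one]

lemma mem_sup_span_singleton_iff (hy : polar Q y y ≠ 0) (hΛ : (Λ : Set W) ⊆ perpSpace Q y)
    {d : W} :
    d ∈ Λ ⊔ Submodule.span ℤ_[p] {y} ↔ orthoProj Q y d ∈ Λ ∧ ‖orthoCoeff Q y d‖ ≤ 1 := by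
  constructor
  · intro hd
    obtain ⟨l, hl, _, hz, rfl⟩ := Submodule.mem_sup.1 hd
    obtain ⟨a, rfl⟩ := Submodule.mem_span_singleton.1 hz
    rw [PadicInt.smul_eq_coe_smul, orthoProj_add_smul hy (hΛ hl), orthoCoeff_add_smul hy (hΛ hl)]
    exact ⟨hl, a.2⟩
  · rintro ⟨hπ, hc⟩
    rw [← orthoProj_add_orthoCoeff_smul Q y d]
    exact Submodule.add_mem_sup hπ
      (Submodule.mem_span_singleton.2 ⟨⟨_, hc⟩, (algebraMap_smul (R := ℤ_[p]) ℚ_[p] ⟨_, hc⟩ y).symm⟩)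

lemma mem_dualLattice_sup_span_singleton_iff (hy : polar Q y y ≠ 0)
    (hΛ : (Λ : Set W) ⊆ perpSpace Q y) {d : W} :
    d ∈ dualLattice Q ⊤ (Λ ⊔ Submodule.span ℤ_[p] {y}) ↔
      orthoProj Q y d ∈ dualLattice Q (perpSpace Q y) Λ ∧
        ‖orthoCoeff Q y d * polar Q y y‖ ≤ 1 := by
  simp only [mem_dualLattice_iff, Submodule.mem_top, true_and, orthoProj_mem_perpSpace hy,
    Submodule.forall_mem_sup, Submodule.mem_span_singleton, forall_exists_index,
    forall_apply_eq_imp_iff]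
  constructor
  · intro h
    refine ⟨fun l hl => ?_, ?_⟩
    · have := h l hl 0
      rwa [zero_smul, add_zero, ← polar_orthoProj_left d (hΛ hl)] at this
    · have := h 0 Λ.zero_mem 1
      rwa [zero_add, one_smul, polar_right_eq_orthoCoeff_mul hy] at this
  · rintro ⟨hπ, hc⟩ l hl a
    rw [polar_add_right, PadicInt.smul_eq_coe_smul, polar_smul_right,
      polar_right_eq_orthoCoeff_mul hy, ← polar_orthoProj_left d (hΛ hl), smul_eq_mul]
    refine (IsUltrametricDist.norm_add_le_max _ _).trans (max_le (hπ l hl) ?_)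
    rw [norm_mul]
    exact mul_le_one₀ a.2 (norm_nonneg _) hc

lemma mem_dualLattice_sup_span_singleton_iff_of_norm_eq (hyn : ‖polar Q y y‖ = p)
    (hΛ : (Λ : Set W) ⊆ perpSpace Q y) {d : W} :
    d ∈ dualLattice Q ⊤ (Λ ⊔ Submodule.span ℤ_[p] {y}) ↔
      orthoProj Q y d ∈ dualLattice Q (perpSpace Q y) Λ ∧ ‖orthoCoeff Q y d‖ < 1 := by
  rw [mem_dualLattice_sup_span_singleton_iff (polar_ne_zero_of_norm_eq hyn) hΛ,
    Padic.norm_mul_le_one_iff_norm_lt_one hyn]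

theorem IsVertexLattice.sup_span_singleton (hΛ : IsVertexLattice Q (perpSpace Q y) Λ)
    (hyn : ‖polar Q y y‖ = p) : IsVertexLattice Q ⊤ (Λ ⊔ Submodule.span ℤ_[p] {y}) := by
  obtain ⟨hΛL, hspan, hpΛ, hdual⟩ := hΛ
  have hy := polar_ne_zero_of_norm_eq hyn
  refine ⟨Set.subset_univ _, span_sup_span_singleton_eq_top hy hspan, fun v hv => ?_,
    fun d hd => ?_⟩
  · rw [mem_sup_span_singleton_iff hy hΛL] at hv
    rw [mem_dualLattice_sup_span_singleton_iff_of_norm_eq hyn hΛL, PadicInt.smul_eq_coe_smul,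
      map_smul, map_smul, ← PadicInt.smul_eq_coe_smul]
    refine ⟨hpΛ _ hv.1, ?_⟩
    rw [smul_eq_mul, norm_mul, PadicInt.coe_natCast, Padic.norm_p]
    exact (mul_le_of_le_one_right (by positivity) hv.2).trans_lt
      (inv_lt_one_of_one_lt₀ (mod_cast (Fact.out : p.Prime).one_lt))
  · rw [mem_dualLattice_sup_span_singleton_iff_of_norm_eq hyn hΛL] at hd
    exact (mem_sup_span_singleton_iff hy hΛL).2 ⟨hdual hd.1, hd.2.le⟩

noncomputable def supSpanSingletonCoeff (hy : polar Q y y ≠ 0)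
    (hΛ : (Λ : Set W) ⊆ perpSpace Q y) :
    ↥(Λ ⊔ Submodule.span ℤ_[p] {y}) →ₗ[ℤ_[p]] ℤ_[p] where
  toFun w := ⟨orthoCoeff Q y w, ((mem_sup_span_singleton_iff hy hΛ).1 w.2).2⟩
  map_add' v w := Subtype.ext (map_add _ _ _)
  map_smul' z w := Subtype.ext <| by
    simp only [Submodule.coe_smul, PadicInt.smul_eq_coe_smul, map_smul]
    rfl

noncomputable def supSpanSingletonProj (hy : polar Q y y ≠ 0)
    (hΛ : (Λ : Set W) ⊆ perpSpace Q y) :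
    ↥(Λ ⊔ Submodule.span ℤ_[p] {y}) →ₗ[ℤ_[p]] Λ :=
  ((orthoProj Q y).restrictScalars ℤ_[p]).restrict fun _ hd =>
    ((mem_sup_span_singleton_iff hy hΛ).1 hd).1

noncomputable def supSpanSingletonQuotientMap (hy : polar Q y y ≠ 0)
    (hΛ : (Λ : Set W) ⊆ perpSpace Q y) :
    ↥(Λ ⊔ Submodule.span ℤ_[p] {y}) →ₗ[ℤ_[p]]
      (Λ ⧸ (dualLattice Q (perpSpace Q y) Λ).comap Λ.subtype) × IsLocalRing.ResidueField ℤ_[p] :=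
  (Submodule.mkQ _ ∘ₗ supSpanSingletonProj hy hΛ).prod
    (Algebra.linearMap ℤ_[p] _ ∘ₗ supSpanSingletonCoeff hy hΛ)

lemma supSpanSingletonQuotientMap_surjective (hy : polar Q y y ≠ 0)
    (hΛ : (Λ : Set W) ⊆ perpSpace Q y) :
    Function.Surjective (supSpanSingletonQuotientMap hy hΛ) := by
  rintro ⟨q, r⟩
  obtain ⟨l, rfl⟩ := Submodule.mkQ_surjective _ q
  obtain ⟨a, rfl⟩ := IsLocalRing.residue_surjective r
  have hmem : (l : W) + a • y ∈ Λ ⊔ Submodule.span ℤ_[p] {y} :=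
    Submodule.add_mem_sup l.2 (Submodule.mem_span_singleton.2 ⟨a, rfl⟩)
  refine ⟨⟨_, hmem⟩, Prod.ext ?_ ?_⟩
  · show Submodule.mkQ _ (supSpanSingletonProj hy hΛ ⟨_, hmem⟩) = Submodule.mkQ _ l
    congr 1
    ext
    show orthoProj Q y (l + a • y) = l
    rw [PadicInt.smul_eq_coe_smul, orthoProj_add_smul hy (hΛ l.2)]
  · show algebraMap ℤ_[p] _ (supSpanSingletonCoeff hy hΛ ⟨_, hmem⟩) = algebraMap ℤ_[p] _ a
    congr 1
    apply Subtype.ext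
    show orthoCoeff Q y (l + a • y) = a
    rw [PadicInt.smul_eq_coe_smul, orthoCoeff_add_smul hy (hΛ l.2)]

lemma ker_supSpanSingletonQuotientMap (hyn : ‖polar Q y y‖ = p)
    (hΛ : (Λ : Set W) ⊆ perpSpace Q y) :
    LinearMap.ker (supSpanSingletonQuotientMap (polar_ne_zero_of_norm_eq hyn) hΛ) =
      (dualLattice Q ⊤ (Λ ⊔ Submodule.span ℤ_[p] {y})).comap
        (Λ ⊔ Submodule.span ℤ_[p] {y}).subtype := by
  ext w
  rw [LinearMap.mem_ker, Submodule.mem_comap, Submodule.subtype_apply,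
    mem_dualLattice_sup_span_singleton_iff_of_norm_eq hyn hΛ, supSpanSingletonQuotientMap,
    LinearMap.prod_apply, Prod.mk_eq_zero]
  exact and_congr (Submodule.Quotient.mk_eq_zero _)
    ((IsLocalRing.residue_eq_zero_iff _).trans PadicInt.mem_nonunits)

lemma card_quotient_dualLattice_sup_span_singleton (hyn : ‖polar Q y y‖ = p)
    (hΛ : (Λ : Set W) ⊆ perpSpace Q y) :
    Nat.card (↥(Λ ⊔ Submodule.span ℤ_[p] {y}) ⧸
        (dualLattice Q ⊤ (Λ ⊔ Submodule.span ℤ_[p] {y})).comap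
          (Λ ⊔ Submodule.span ℤ_[p] {y}).subtype) =
      Nat.card (Λ ⧸ (dualLattice Q (perpSpace Q y) Λ).comap Λ.subtype) * p := by
  have hy := polar_ne_zero_of_norm_eq hyn
  rw [← ker_supSpanSingletonQuotientMap hyn hΛ,
    Nat.card_congr ((supSpanSingletonQuotientMap hy hΛ).quotKerEquivOfSurjective
      (supSpanSingletonQuotientMap_surjective hy hΛ)).toEquiv,
    Nat.card_prod, Nat.card_congr PadicInt.residueField.toEquiv, Nat.card_zmod]

end Lattices

theorem stmt_5_general (p : ℕ) [Fact p.Prime]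
    (W : Type*) [AddCommGroup W] [Module ℚ_[p] W] [Module ℤ_[p] W]
    [IsScalarTower ℤ_[p] ℚ_[p] W]
    (Q : QuadraticForm ℚ_[p] W)
    (x₀ : W)
    (hx₀ : ∃ u : ℤ_[p]ˣ, QuadraticMap.polar Q x₀ x₀ = (p : ℚ_[p]) * ((u : ℤ_[p]) : ℚ_[p]))
    (Λ : Submodule ℤ_[p] W) (hΛ : IsVertexLattice Q (perpSpace Q x₀) Λ)
    (t : ℕ)
    (ht : Nat.card
      (↥Λ ⧸ (dualLattice Q (perpSpace Q x₀) Λ).comap Λ.subtype) = p ^ t) :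
    IsVertexLattice Q ⊤ (Λ ⊔ Submodule.span ℤ_[p] {(p : ℚ_[p])⁻¹ • x₀}) ∧
    Nat.card
      (↥(Λ ⊔ Submodule.span ℤ_[p] {(p : ℚ_[p])⁻¹ • x₀}) ⧸
        (dualLattice Q ⊤ (Λ ⊔ Submodule.span ℤ_[p] {(p : ℚ_[p])⁻¹ • x₀})).comap
          (Λ ⊔ Submodule.span ℤ_[p] {(p : ℚ_[p])⁻¹ • x₀}).subtype) = p ^ (t + 1) := by
  obtain ⟨u, hu⟩ := hx₀
  have hp : (p : ℚ_[p]) ≠ 0 := Nat.cast_ne_zero.2 (Fact.out : p.Prime).ne_zero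
  have hyn : ‖polar Q ((p : ℚ_[p])⁻¹ • x₀) ((p : ℚ_[p])⁻¹ • x₀)‖ = p := by
    rw [polar_smul_left, polar_smul_right, hu, smul_eq_mul, smul_eq_mul, norm_mul, norm_mul,
      norm_mul, norm_inv, Padic.norm_p, PadicInt.padic_norm_e_of_padicInt, PadicInt.norm_units]
    field_simp
  rw [← perpSpace_smul Q x₀ (inv_ne_zero hp)] at hΛ ht
  refine ⟨hΛ.sup_span_singleton hyn, ?_⟩
  rw [card_quotient_dualLattice_sup_span_singleton hyn hΛ.1, ht, pow_succ]

/-- Let `L₀^♯ = W` be a nondegenerate quadratic space over `ℚ_p` (`p` odd),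
`x₀ ∈ W` with `[x₀,x₀] ∈ p·ℤ_p^×`, and `L₀ = x₀^⊥`.  If `Λ` is a vertex lattice in `L₀`
of type `t` (the type is encoded by `#(Λ/Λ^∨) = p^t`), then
`Λ^♯ := Λ ⊕ ℤ_p (p⁻¹ x₀)` is a vertex lattice in `L₀^♯` of type `t + 1`. -/
theorem stmt_5 (p : ℕ) [Fact p.Prime] (hp : p ≠ 2)
    (W : Type*) [AddCommGroup W] [Module ℚ_[p] W] [Module ℤ_[p] W]
    [IsScalarTower ℤ_[p] ℚ_[p] W] [FiniteDimensional ℚ_[p] W]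
    (Q : QuadraticForm ℚ_[p] W) (hQ : (QuadraticMap.polarBilin Q).Nondegenerate)
    (x₀ : W)
    (hx₀ : ∃ u : ℤ_[p]ˣ, QuadraticMap.polar Q x₀ x₀ = (p : ℚ_[p]) * ((u : ℤ_[p]) : ℚ_[p]))
    (Λ : Submodule ℤ_[p] W) (hΛ : IsVertexLattice Q (perpSpace Q x₀) Λ)
    (t : ℕ)
    (ht : Nat.card
      (↥Λ ⧸ (dualLattice Q (perpSpace Q x₀) Λ).comap Λ.subtype) = p ^ t) :
    IsVertexLattice Q ⊤ (Λ ⊔ Submodule.span ℤ_[p] {(p : ℚ_[p])⁻¹ • x₀}) ∧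
    Nat.card
      (↥(Λ ⊔ Submodule.span ℤ_[p] {(p : ℚ_[p])⁻¹ • x₀}) ⧸
        (dualLattice Q ⊤ (Λ ⊔ Submodule.span ℤ_[p] {(p : ℚ_[p])⁻¹ • x₀})).comap
          (Λ ⊔ Submodule.span ℤ_[p] {(p : ℚ_[p])⁻¹ • x₀}).subtype) = p ^ (t + 1) :=
  stmt_5_general p W Q x₀ hx₀ Λ hΛ t ht
end
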